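/- Let α ∈ (1,2), let t ≥ c^{1-α} be an integer with 16·C·t^{1/(α−1)} > 1, and let X₁, …, X_t be i.i.d. copies of X. Then the probability that there exists some 1 ≤ j ≤ t with X_j ≥ 16·C·t^{1/(α−1)} is at least 1 − exp(−β·(32C)^{1−α}/(α−1)). -/

import Mathlib

open MeasureTheory ProbabilityTheory Real Filter

/-- The normalising constant `β(α) = (∑_{i≥1} i^{-α})⁻¹` of the power law. -/
noncomputable def betaPL (α : ℝ) : ℝ := (∑' i : ℕ, ((i : ℝ) + 1) ^ (-α))⁻¹

/-- The constant `c = ((α-1)/(8β))^{1/(1-α)}`. -/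
noncomputable def cPL (α : ℝ) : ℝ := ((α - 1) / (8 * betaPL α)) ^ ((1 : ℝ) / (1 - α))

/-- `P(X < x)` for the power-law random variable `X`. -/
noncomputable def PXlt (α : ℝ) (x : ℝ) : ℝ :=
  ∑' i : ℕ, if ((i : ℝ) + 1) < x then betaPL α * ((i : ℝ) + 1) ^ (-α) else 0

/-- The constant `C = C(α,t) = β (2c)^{2-α} / ((2-α) P(X < c t^{1/(α-1)} + 1))`. -/
noncomputable def CPL (α : ℝ) (t : ℕ) : ℝ :=
  betaPL α * (2 * cPL α) ^ (2 - α) /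
    ((2 - α) * PXlt α (cPL α * (t : ℝ) ^ (1 / (α - 1)) + 1))

/-!
A single `X_j` exceeds `M ≥ 1` with probability at least `τ = β (2M)^{1-α} / (α - 1)`: the tail
`∑_{i ≥ ⌈M⌉} β i^{-α}` dominates `β ∫_{⌈M⌉}^∞ x^{-α} dx` and `⌈M⌉ ≤ 2M`. By independence all `t`
copies stay below `M` with probability at most `(1 - τ)^t ≤ exp(-τ t)`, and for
`M = 16 C t^{1/(α-1)}` the factor `t^{1/(α-1)}` raised to `1 - α` cancels `t`, leaving the
exponent `β (32 C)^{1-α} / (α - 1)`.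
-/

lemma betaPL_pos {α : ℝ} (hα : 1 < α) : 0 < betaPL α := by
  have hs : Summable (fun i : ℕ => ((i : ℝ) + 1) ^ (-α)) := by
    simpa using (summable_nat_add_iff 1).2 (Real.summable_nat_rpow.2 (by linarith : -α < -1))
  exact inv_pos.2 (hs.tsum_pos (fun i => by positivity) 0 (by positivity))

lemma rpow_one_sub_div_le_tsum_rpow_neg {α : ℝ} (hα : 1 < α) {m : ℕ} (hm : 0 < m) :
    (m : ℝ) ^ (1 - α) / (α - 1) ≤ ∑' n : ℕ, ((n + m : ℕ) : ℝ) ^ (-α) := by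
  have hm' : (0 : ℝ) < m := by exact_mod_cast hm
  have anti : AntitoneOn (fun x : ℝ => x ^ (-α)) (Set.Ici (m : ℝ)) := fun a ha b _ hab =>
    Real.rpow_le_rpow_of_nonpos (hm'.trans_le ha) hab (by linarith)
  calc (m : ℝ) ^ (1 - α) / (α - 1) = ∫ x in Set.Ioi (m : ℝ), x ^ (-α) := by
        rw [integral_Ioi_rpow_of_lt (by linarith) hm', neg_div, ← div_neg]
        ring_nf
    _ ≤ _ := anti.integral_le_tsum_comp_add m (Real.summable_nat_rpow.2 (by linarith))
        fun x hx => Real.rpow_nonneg (hm'.trans (Set.mem_Ioi.1 hx)).le _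

section Tail

variable {Ω : Type*} [MeasurableSpace Ω] {μ : Measure Ω} {Y : Ω → ℕ} {α b : ℝ}

lemma ofReal_rpow_one_sub_div_le_measure_le (hY : Measurable Y) (hα : 1 < α) (hb : 0 ≤ b)
    (hdist : ∀ i : ℕ, 1 ≤ i → μ {ω | Y ω = i} = ENNReal.ofReal (b * (i : ℝ) ^ (-α)))
    {m : ℕ} (hm : 0 < m) :
    ENNReal.ofReal (b * (m : ℝ) ^ (1 - α) / (α - 1)) ≤ μ {ω | m ≤ Y ω} := by
  have hsum : Summable (fun n : ℕ => ((n + m : ℕ) : ℝ) ^ (-α)) :=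
    (summable_nat_add_iff m).2 (Real.summable_nat_rpow.2 (by linarith))
  have hdisj : Pairwise (Function.onFun Disjoint fun n : ℕ => {ω | Y ω = n + m}) := fun i j hij =>
    Set.disjoint_left.2 fun ω hi hj => hij (by simp only [Set.mem_ofPred_eq] at hi hj; omega)
  calc ENNReal.ofReal (b * (m : ℝ) ^ (1 - α) / (α - 1))
      ≤ ENNReal.ofReal (∑' n : ℕ, b * ((n + m : ℕ) : ℝ) ^ (-α)) := by
        rw [tsum_mul_left, mul_div_assoc]
        exact ENNReal.ofReal_le_ofReal
          (mul_le_mul_of_nonneg_left (rpow_one_sub_div_le_tsum_rpow_neg hα hm) hb)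
    _ = ∑' n : ℕ, μ {ω | Y ω = n + m} := by
        rw [ENNReal.ofReal_tsum_of_nonneg (fun n => by positivity) (hsum.mul_left b)]
        exact tsum_congr fun n => (hdist _ (by omega)).symm
    _ = μ (⋃ n : ℕ, {ω | Y ω = n + m}) :=
        (measure_iUnion hdisj fun n => hY (measurableSet_singleton _)).symm
    _ ≤ μ {ω | m ≤ Y ω} := measure_mono fun ω ⟨_, ⟨n, hn⟩, hω⟩ => by
        subst hn
        simp only [Set.mem_ofPred_eq] at hω ⊢
        omega

lemma rpow_one_sub_div_le_measure_le [IsFiniteMeasure μ] (hY : Measurable Y) (hα : 1 < α)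
    (hb : 0 ≤ b)
    (hdist : ∀ i : ℕ, 1 ≤ i → μ {ω | Y ω = i} = ENNReal.ofReal (b * (i : ℝ) ^ (-α)))
    {M : ℝ} (hM : 1 ≤ M) :
    b * (2 * M) ^ (1 - α) / (α - 1) ≤ (μ {ω | M ≤ (Y ω : ℝ)}).toReal := by
  have hm : 0 < ⌈M⌉₊ := Nat.ceil_pos.2 (by linarith)
  have hm2M : (⌈M⌉₊ : ℝ) ≤ 2 * M := (Nat.ceil_lt_add_one (by linarith)).le.trans (by linarith)
  calc b * (2 * M) ^ (1 - α) / (α - 1) ≤ b * (⌈M⌉₊ : ℝ) ^ (1 - α) / (α - 1) := by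
        refine div_le_div_of_nonneg_right (mul_le_mul_of_nonneg_left ?_ hb) (by linarith)
        exact Real.rpow_le_rpow_of_nonpos (by exact_mod_cast hm) hm2M (by linarith)
    _ ≤ (μ {ω | ⌈M⌉₊ ≤ Y ω}).toReal := (ENNReal.ofReal_le_iff_le_toReal (measure_ne_top _ _)).1
        (ofReal_rpow_one_sub_div_le_measure_le hY hα hb hdist hm)
    _ ≤ _ := ENNReal.toReal_mono (measure_ne_top _ _)
        (measure_mono fun ω (hω : ⌈M⌉₊ ≤ Y ω) => Nat.ceil_le.1 hω)

end Tail

lemma one_sub_exp_le_measure_exists_mem {Ω ι γ : Type*} [MeasurableSpace Ω] [MeasurableSpace γ]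
    {μ : Measure Ω} [IsProbabilityMeasure μ] {X : ι → Ω → γ} (hind : iIndepFun X μ)
    (hmeas : ∀ j, Measurable (X j)) {S : Set γ} (hS : MeasurableSet S) (s : Finset ι) {p : ℝ}
    (hp : ∀ j ∈ s, p ≤ (μ (X j ⁻¹' S)).toReal) :
    1 - exp (-(p * s.card)) ≤ (μ {ω | ∃ j ∈ s, X j ω ∈ S}).toReal := by
  set E := {ω | ∃ j ∈ s, X j ω ∈ S}
  have hE : Eᶜ = ⋂ j ∈ s, X j ⁻¹' Sᶜ := by ext; simp [E]
  have hEc : MeasurableSet Eᶜ := hE ▸ s.measurableSet_biInter fun j _ => hmeas j hS.compl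
  have hmiss : ∀ j ∈ s, (μ (X j ⁻¹' Sᶜ)).toReal ≤ exp (-p) := fun j hj =>
    calc (μ (X j ⁻¹' Sᶜ)).toReal = 1 - (μ (X j ⁻¹' S)).toReal :=
          probReal_compl_eq_one_sub (hmeas j hS)
      _ ≤ 1 - p := by linarith [hp j hj]
      _ ≤ exp (-p) := by linarith [add_one_le_exp (-p)]
  have hmiss_all : (μ Eᶜ).toReal ≤ exp (-(p * s.card)) :=
    calc (μ Eᶜ).toReal = ∏ j ∈ s, (μ (X j ⁻¹' Sᶜ)).toReal := by
          rw [hE, hind.meas_biInter fun j _ => ⟨Sᶜ, hS.compl, rfl⟩, ENNReal.toReal_prod]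
      _ ≤ ∏ _j ∈ s, exp (-p) := Finset.prod_le_prod (fun _ _ => ENNReal.toReal_nonneg) hmiss
      _ = exp (-(p * s.card)) := by rw [Finset.prod_const, ← Real.exp_nat_mul]; ring_nf
  have hE_compl : (μ E).toReal = 1 - (μ Eᶜ).toReal := by
    have h := probReal_compl_eq_one_sub (μ := μ) hEc
    rwa [compl_compl] at h
  linarith

lemma mul_rpow_one_div_sub_one_rpow_one_sub_mul {a x α : ℝ} (ha : 0 ≤ a) (hx : 0 < x)
    (hα : α ≠ 1) : (a * x ^ (1 / (α - 1))) ^ (1 - α) * x = a ^ (1 - α) := by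
  have hexp : 1 / (α - 1) * (1 - α) = -1 := by
    field_simp [sub_ne_zero.2 hα]
    ring
  rw [Real.mul_rpow ha (Real.rpow_nonneg hx.le _), ← Real.rpow_mul hx.le, hexp,
    Real.rpow_neg_one, mul_assoc, inv_mul_cancel₀ hx.ne', mul_one]

theorem exists_large_initial_degree_general
    {Ω : Type*} [MeasurableSpace Ω] (μ : Measure Ω) [IsProbabilityMeasure μ]
    (α : ℝ) (hα : α ∈ Set.Ioo (1 : ℝ) 2)
    (X : ℕ → Ω → ℕ) (hmeas : ∀ n, Measurable (X n))
    (hdist : ∀ n, ∀ i : ℕ, 1 ≤ i →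
      μ {ω | X n ω = i} = ENNReal.ofReal (betaPL α * (i : ℝ) ^ (-α)))
    (hindep : iIndepFun X μ)
    (t : ℕ)
    (hbig : 1 < 16 * CPL α t * (t : ℝ) ^ (1 / (α - 1))) :
    1 - Real.exp (-(betaPL α * (32 * CPL α t) ^ (1 - α) / (α - 1))) ≤
      (μ {ω | ∃ j ∈ Finset.Icc 1 t,
          16 * CPL α t * (t : ℝ) ^ (1 / (α - 1)) ≤ (X j ω : ℝ)}).toReal := by
  obtain ⟨hα1, -⟩ := hα
  have ht : (0 : ℝ) < t := Nat.cast_pos.2 <| Nat.pos_of_ne_zero fun h0 => by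
    rw [h0, Nat.cast_zero, Real.zero_rpow (one_div_ne_zero (sub_ne_zero.2 hα1.ne'))] at hbig
    linarith
  have hC : 0 ≤ 32 * CPL α t := by
    linarith [pos_of_mul_pos_left (one_pos.trans hbig) (Real.rpow_nonneg ht.le (1 / (α - 1)))]
  set M := 16 * CPL α t * (t : ℝ) ^ (1 / (α - 1)) with hM
  have key := one_sub_exp_le_measure_exists_mem hindep hmeas (S := {k : ℕ | M ≤ k})
    MeasurableSet.of_discrete (Finset.Icc 1 t) fun j _ =>
      rpow_one_sub_div_le_measure_le (hmeas j) hα1 (betaPL_pos hα1).le (hdist j) hbig.le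
  convert key using 3
  · rw [Nat.card_Icc, add_tsub_cancel_right, div_mul_eq_mul_div, mul_assoc, hM, ← mul_assoc 2,
      ← mul_assoc 2, show (2 : ℝ) * 16 = 32 by norm_num,
      mul_rpow_one_div_sub_one_rpow_one_sub_mul hC ht hα1.ne']
  · rfl

theorem exists_large_initial_degree
    {Ω : Type*} [MeasurableSpace Ω] (μ : Measure Ω) [IsProbabilityMeasure μ]
    (α : ℝ) (hα : α ∈ Set.Ioo (1 : ℝ) 2)
    (X : ℕ → Ω → ℕ) (hmeas : ∀ n, Measurable (X n))
    (hdist : ∀ n, ∀ i : ℕ, 1 ≤ i →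
      μ {ω | X n ω = i} = ENNReal.ofReal (betaPL α * (i : ℝ) ^ (-α)))
    (hindep : iIndepFun X μ)
    (t : ℕ) (ht : cPL α ^ (1 - α) ≤ (t : ℝ))
    (hbig : 1 < 16 * CPL α t * (t : ℝ) ^ (1 / (α - 1))) :
    1 - Real.exp (-(betaPL α * (32 * CPL α t) ^ (1 - α) / (α - 1))) ≤
      (μ {ω | ∃ j ∈ Finset.Icc 1 t,
          16 * CPL α t * (t : ℝ) ^ (1 / (α - 1)) ≤ (X j ω : ℝ)}).toReal :=
  exists_large_initial_degree_general μ α hα X hmeas hdist hindep t hbig
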